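/- For a Tychonoff space X and directed families α, β of subsets of X, the topology C_α is coarser than or equal to the topology C_β if and only if for each A ∈ α there is B ∈ β with A contained in the closure of B. -/

import Mathlib

open Set TopologicalSpace

/-- The basic set `V(f,A,ε)` of functions uniformly `ε`-close to `f` on `A`. -/
def Vset {X : Type*} [TopologicalSpace X] (f : C(X, ℝ)) (A : Set X) (ε : ℝ) : Set C(X, ℝ) :=
  {g | ∀ x ∈ A, |f x - g x| < ε}

/-- A nonempty directed family of subsets of `X`. -/
structure DirFam (X : Type*) where
  sets : Set (Set X)
  nonempty : sets.Nonempty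
  directed : ∀ A ∈ sets, ∀ B ∈ sets, ∃ E ∈ sets, A ∪ B ⊆ E

/-- The uniform topology `C_γ` on `C(X)` determined by a directed family `γ`. -/
def DirFam.top {X : Type*} [TopologicalSpace X] (γ : DirFam X) : TopologicalSpace C(X, ℝ) where
  IsOpen U := ∀ f ∈ U, ∃ A ∈ γ.sets, ∃ ε > 0, Vset f A ε ⊆ U
  isOpen_univ := by
    intro f _
    obtain ⟨A, hA⟩ := γ.nonempty
    exact ⟨A, hA, 1, one_pos, Set.subset_univ _⟩
  isOpen_inter := by
    intro U W hU hW f hf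
    obtain ⟨A, hA, ε, hε, hAU⟩ := hU f hf.1
    obtain ⟨B, hB, δ, hδ, hBW⟩ := hW f hf.2
    obtain ⟨E, hE, hsub⟩ := γ.directed A hA B hB
    refine ⟨E, hE, min ε δ, lt_min hε hδ, fun g hg => ⟨?_, ?_⟩⟩
    · exact hAU fun x hx =>
        lt_of_lt_of_le (hg x (hsub (Set.mem_union_left _ hx))) (min_le_left _ _)
    · exact hBW fun x hx =>
        lt_of_lt_of_le (hg x (hsub (Set.mem_union_right _ hx))) (min_le_right _ _)
  isOpen_sUnion := by
    intro S hS f hf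
    obtain ⟨U, hU, hfU⟩ := hf
    obtain ⟨A, hA, ε, hε, h⟩ := hS U hU f hfU
    exact ⟨A, hA, ε, hε, h.trans (Set.subset_sUnion_of_mem hU)⟩

/-- The lattice of uniform topologies on `C(X)`. -/
def UX (X : Type*) [TopologicalSpace X] : Set (TopologicalSpace C(X, ℝ)) :=
  {t | ∃ γ : DirFam X, t = γ.top}

/-- `tle s t` means the topology `s` is coarser than or equal to `t`
(inclusion of topologies, `τ_s ⊆ τ_t`). -/
def tle {X : Type*} [TopologicalSpace X] (s t : TopologicalSpace C(X, ℝ)) : Prop :=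
  ∀ U : Set C(X, ℝ), s.IsOpen U → t.IsOpen U

/-- The directed family `{∅}`, generating the indiscrete topology `C_∅`. -/
def cEmptyFam (X : Type*) : DirFam X :=
  ⟨{∅}, Set.singleton_nonempty _, by
    intro A hA B hB
    rw [Set.mem_singleton_iff] at hA hB
    exact ⟨∅, Set.mem_singleton _, by simp [hA, hB]⟩⟩

/-- The directed family `{X}`, generating the uniform-convergence topology `C_u`. -/
def cUnivFam (X : Type*) : DirFam X :=
  ⟨{Set.univ}, Set.singleton_nonempty _, fun A _ B _ =>
    ⟨Set.univ, Set.mem_singleton _, Set.subset_univ _⟩⟩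

/-- The directed family `{{x}}`. -/
def ptFam {X : Type*} (x : X) : DirFam X :=
  ⟨{{x}}, Set.singleton_nonempty _, by
    intro A hA B hB
    rw [Set.mem_singleton_iff] at hA hB
    exact ⟨{x}, Set.mem_singleton _, by simp [hA, hB]⟩⟩

/-- The directed family `{A}`. -/
def setFam {X : Type*} (A : Set X) : DirFam X :=
  ⟨{A}, Set.singleton_nonempty _, by
    intro B hB E hE
    rw [Set.mem_singleton_iff] at hB hE
    exact ⟨A, Set.mem_singleton _, by simp [hB, hE]⟩⟩

/-- The topology `C_x`. -/
def Cpt {X : Type*} [TopologicalSpace X] (x : X) : TopologicalSpace C(X, ℝ) :=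
  (ptFam x).top

/-- The topology `C_A`. -/
def CSet {X : Type*} [TopologicalSpace X] (A : Set X) : TopologicalSpace C(X, ℝ) :=
  (setFam A).top

/-- The pushforward `f*γ = {f[A] : A ∈ γ}` of a directed family along a map. -/
def DirFam.push {X Y : Type*} (f : X → Y) (γ : DirFam X) : DirFam Y :=
  ⟨(Set.image f) '' γ.sets, γ.nonempty.image _, by
    rintro A ⟨A', hA', rfl⟩ B ⟨B', hB', rfl⟩
    obtain ⟨E, hE, h⟩ := γ.directed A' hA' B' hB'
    exact ⟨f '' E, ⟨E, hE, rfl⟩, by rw [← Set.image_union]; exact Set.image_mono (f := f) h⟩⟩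


/-- `C_α ≤ C_β` iff every `A ∈ α` is contained in the closure of some `B ∈ β`. -/
theorem stmt1 {X : Type*} [TopologicalSpace X] [T2Space X] [CompletelyRegularSpace X]
    (α β : DirFam X) :
    tle α.top β.top ↔ ∀ A ∈ α.sets, ∃ B ∈ β.sets, A ⊆ closure B := by
  constructor
  · intro h A hA
    -- the α-interior of Vset 0 A 1
    set I : Set C(X, ℝ) := {f | ∃ A' ∈ α.sets, ∃ ε > 0, Vset f A' ε ⊆ Vset (0 : C(X, ℝ)) A 1}
      with hI
    have hIopen : α.top.IsOpen I := by
      intro f ⟨A', hA', ε, hε, hsub⟩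
      refine ⟨A', hA', ε / 2, by linarith, ?_⟩
      intro g hg
      refine ⟨A', hA', ε / 2, by linarith, ?_⟩
      intro k hk
      refine hsub fun x hx => ?_
      calc |f x - k x| ≤ |f x - g x| + |g x - k x| := abs_sub_le _ _ _
        _ < ε / 2 + ε / 2 := add_lt_add (hg x hx) (hk x hx)
        _ = ε := by ring
    have hIβ : β.top.IsOpen I := h I hIopen
    have h0 : (0 : C(X, ℝ)) ∈ I := ⟨A, hA, 1, one_pos, subset_rfl⟩
    obtain ⟨B, hB, δ, hδ, hsub⟩ := hIβ 0 h0
    refine ⟨B, hB, fun x hx => ?_⟩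
    by_contra hxB
    obtain ⟨φ, hφc, hφx, hφB⟩ := CompletelyRegularSpace.completely_regular x (closure B)
      isClosed_closure hxB
    set g : C(X, ℝ) := ⟨fun y => 2 * (1 - (φ y : ℝ)), by
      fun_prop⟩ with hg
    have hgB : g ∈ Vset (0 : C(X, ℝ)) B δ := by
      intro y hy
      have : φ y = 1 := hφB (subset_closure hy)
      simp [hg, this, hδ]
    obtain ⟨A'', hA'', ε'', hε'', hsub''⟩ := hsub hgB
    have hgA : g ∈ Vset (0 : C(X, ℝ)) A 1 := hsub'' (fun y hy => by
      simpa using hε'')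
    have := hgA x hx
    rw [hg] at this
    simp [hφx] at this
  · intro h U hU f hf
    obtain ⟨A, hA, ε, hε, hsub⟩ := hU f hf
    obtain ⟨B, hB, hAB⟩ := h A hA
    refine ⟨B, hB, ε / 2, by linarith, fun g hg => hsub fun x hx => ?_⟩
    have hcl : closure B ⊆ {y | |f y - g y| ≤ ε / 2} := by
      apply closure_minimal (fun y hy => (hg y hy).le)
      exact isClosed_le (f := fun y => |f y - g y|) (by fun_prop) continuous_const
    have := hcl (hAB hx)
    simpa using this.trans_lt (by linarith)
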